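/- Deterministic limit: fix n > 0 and a positive continuous N_det on a compact surface ∂Ω with area measure dA, and let N_min = min_{x∈∂Ω} N_det(x). Then as m → ∞, the failure probability F_N^{(m)}(n) = 1 - exp(-(n^m)∫_{∂Ω} N_det^{-m} dA) tends to 0 if n < N_min and to 1 if n > N_min. -/

import Mathlib

/-!
Write `n ^ m * ∫ N_det ^ (-m) dA = ∫ (n / N_det) ^ m dA`. If `n < N_min`, the integrand is at
most `(n / N_min) ^ m`, which tends to `0`, so the exponent vanishes and `F → 0`. If `n > N_min`,
pick `N_min < b < n`; by continuity `N_det < b` on a neighbourhood of the minimizer, which has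
positive area, and there the integrand is at least `(n / b) ^ m → ∞`, so `F → 1`.
-/

open MeasureTheory Filter Topology

section IntegralRpow

variable {X : Type*} [MeasurableSpace X] (μ : Measure X)

lemma rpow_mul_integral_rpow_neg {f : X → ℝ} (hf : ∀ x, 0 < f x) {n : ℝ} (hn : 0 ≤ n) (m : ℝ) :
    n ^ m * ∫ x, f x ^ (-m) ∂μ = ∫ x, (n / f x) ^ m ∂μ := by
  rw [← integral_const_mul]
  congr 1 with x
  rw [Real.div_rpow hn (hf x).le, Real.rpow_neg (hf x).le, div_eq_mul_inv]

variable [IsFiniteMeasure μ] {f : X → ℝ} {c : ℝ}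

lemma tendsto_integral_rpow_atTop_zero (hf : ∀ x, 0 ≤ f x) (hfc : ∀ x, f x ≤ c) (hc : c < 1) :
    Tendsto (fun m : ℝ => ∫ x, f x ^ m ∂μ) atTop (𝓝 0) := by
  rcases isEmpty_or_nonempty X with _ | ⟨⟨x⟩⟩
  · simp [integral_of_isEmpty]
  have hc₀ : 0 ≤ c := (hf x).trans (hfc x)
  have hbound : Tendsto (fun m : ℝ => c ^ m * μ.real Set.univ) atTop (𝓝 0) := by
    simpa using (tendsto_rpow_atTop_of_base_lt_one c (by linarith) hc).mul_const (μ.real Set.univ)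
  refine tendsto_of_tendsto_of_tendsto_of_le_of_le' tendsto_const_nhds hbound
    (Eventually.of_forall fun m => integral_nonneg fun x => Real.rpow_nonneg (hf x) m) ?_
  filter_upwards [eventually_ge_atTop 0] with m hm
  calc ∫ x, f x ^ m ∂μ ≤ ∫ _, c ^ m ∂μ :=
        integral_mono_of_nonneg (Eventually.of_forall fun x => Real.rpow_nonneg (hf x) m)
          (integrable_const _)
          (Eventually.of_forall fun x => Real.rpow_le_rpow (hf x) (hfc x) hm)
    _ = c ^ m * μ.real Set.univ := by rw [integral_const, smul_eq_mul, mul_comm]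

lemma tendsto_integral_rpow_atTop_atTop {s : Set X} (hs : MeasurableSet s) (hμs : 0 < μ s)
    (hc : 1 < c) (hf : ∀ x, 0 ≤ f x) (hfc : ∀ x ∈ s, c ≤ f x)
    (hint : ∀ m : ℝ, Integrable (fun x => f x ^ m) μ) :
    Tendsto (fun m : ℝ => ∫ x, f x ^ m ∂μ) atTop atTop := by
  have hμs' : 0 < μ.real s := ENNReal.toReal_pos hμs.ne' (measure_ne_top μ s)
  refine tendsto_atTop_mono' _ ?_
    ((tendsto_rpow_atTop_of_base_gt_one c hc).atTop_mul_const hμs')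
  filter_upwards [eventually_ge_atTop 0] with m hm
  calc c ^ m * μ.real s ≤ ∫ x in s, f x ^ m ∂μ :=
        setIntegral_ge_of_const_le_real hs (measure_ne_top μ s)
          (fun x hx => Real.rpow_le_rpow (by linarith) (hfc x hx) hm) (hint m).integrableOn
    _ ≤ ∫ x, f x ^ m ∂μ :=
        setIntegral_le_integral (hint m) (Eventually.of_forall fun x => Real.rpow_nonneg (hf x) m)

end IntegralRpow

theorem deterministic_limit_general
    {X : Type*} [MetricSpace X] [CompactSpace X]
    [MeasurableSpace X] [BorelSpace X]
    (μ : Measure X) [IsFiniteMeasure μ]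
    (Ndet : X → ℝ) (hcont : Continuous Ndet) (hpos : ∀ x, 0 < Ndet x)
    (x₀ : X) (hmin : ∀ x, Ndet x₀ ≤ Ndet x)
    (hμ : ∀ ε : ℝ, 0 < ε → 0 < μ (Metric.ball x₀ ε))
    (n : ℝ) (hn : 0 < n) :
    (n < Ndet x₀ →
      Tendsto (fun m : ℝ => 1 - Real.exp (-(n ^ m * ∫ x, Ndet x ^ (-m) ∂μ)))
        atTop (nhds 0)) ∧
    (Ndet x₀ < n →
      Tendsto (fun m : ℝ => 1 - Real.exp (-(n ^ m * ∫ x, Ndet x ^ (-m) ∂μ)))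
        atTop (nhds 1)) := by
  simp_rw [rpow_mul_integral_rpow_neg μ hpos hn.le]
  have hf : ∀ x, 0 ≤ n / Ndet x := fun x => div_nonneg hn.le (hpos x).le
  refine ⟨fun hlt => ?_, fun hlt => ?_⟩
  · have h := tendsto_integral_rpow_atTop_zero μ hf
      (fun x => div_le_div_of_nonneg_left hn.le (hpos x₀) (hmin x))
      ((div_lt_one (hpos x₀)).mpr hlt)
    have hexp := (Real.continuous_exp.comp continuous_neg).tendsto' 0 1 (by simp)
    simpa using (hexp.comp h).const_sub 1
  · obtain ⟨b, hNb, hbn⟩ := exists_between hlt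
    set s := Ndet ⁻¹' Set.Iio b
    obtain ⟨ε, hε, hball⟩ := Metric.mem_nhds_iff.mp (hcont.continuousAt (Iio_mem_nhds hNb))
    have hμs : 0 < μ s := (hμ ε hε).trans_le (measure_mono hball)
    have hnb : 1 < n / b := (one_lt_div (hNb.trans' (hpos x₀))).mpr hbn
    have hint (m : ℝ) : Integrable (fun x => (n / Ndet x) ^ m) μ :=
      ((continuous_const.div hcont fun x => (hpos x).ne').rpow_const fun x =>
        Or.inl (div_pos hn (hpos x)).ne').integrable_of_hasCompactSupport
        (HasCompactSupport.of_compactSpace _)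
    have h := tendsto_integral_rpow_atTop_atTop μ (isOpen_Iio.preimage hcont).measurableSet hμs
      hnb hf (fun x hx => div_le_div_of_nonneg_left hn.le (hpos x) (le_of_lt hx)) hint
    simpa using (Real.tendsto_exp_atBot.comp (tendsto_neg_atTop_atBot.comp h)).const_sub 1

/-- Deterministic limit: on a compact surface with positive continuous `N_det`, minimum
value `N_min = N_det x₀`, and area measure giving positive mass to every neighborhood of
the minimizer `x₀`, the failure probability
`F_N^{(m)}(n) = 1 - exp (-n^m ∫ N_det^{-m} dA)` tends, as the Weibull shape `m → ∞`,
to `0` if `n < N_min` and to `1` if `n > N_min`. -/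
theorem deterministic_limit
    {X : Type*} [MetricSpace X] [CompactSpace X] [Nonempty X]
    [MeasurableSpace X] [BorelSpace X]
    (μ : Measure X) [IsFiniteMeasure μ]
    (Ndet : X → ℝ) (hcont : Continuous Ndet) (hpos : ∀ x, 0 < Ndet x)
    (x₀ : X) (hmin : ∀ x, Ndet x₀ ≤ Ndet x)
    (hμ : ∀ ε : ℝ, 0 < ε → 0 < μ (Metric.ball x₀ ε))
    (n : ℝ) (hn : 0 < n) :
    (n < Ndet x₀ →
      Tendsto (fun m : ℝ => 1 - Real.exp (-(n ^ m * ∫ x, Ndet x ^ (-m) ∂μ)))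
        atTop (nhds 0)) ∧
    (Ndet x₀ < n →
      Tendsto (fun m : ℝ => 1 - Real.exp (-(n ^ m * ∫ x, Ndet x ^ (-m) ∂μ)))
        atTop (nhds 1)) :=
  deterministic_limit_general μ Ndet hcont hpos x₀ hmin hμ n hn
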